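/- arXiv:1007.1894 — 2 statements merged into one kernel-verified Lean document; each statement's English description precedes it below -/
import Mathlib

section
/- Let 0 < a ≤ b and 0 < ε < a/12. Then the function r ↦ 4a(a¹²/r¹² − b⁶/r⁶) − 4εa·|12a¹¹/r¹² − 6b⁵/r⁶| on (0,∞) is lower regular. -/
/-- A function `f` on `(0,∞)` is lower regular if it is bounded below by `-ψ` for
some positive nonincreasing function `ψ` with `∫₀^∞ r·ψ(r) dr < ∞`. -/
def LowerRegular (f : ℝ → ℝ) : Prop :=
  ∃ ψ : ℝ → ℝ, (∀ r > (0 : ℝ), 0 < ψ r) ∧ AntitoneOn ψ (Set.Ioi 0) ∧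
    MeasureTheory.IntegrableOn (fun r => r * ψ r) (Set.Ioi 0) ∧
    ∀ r > (0 : ℝ), -ψ r ≤ f r

/-! Bounding the absolute value by the sum of its terms gives `f r ≥ P / r ^ 12 - K / r ^ 6`
with `P = 4 a ^ 12 (a - 12 ε)`, positive exactly because `ε < a / 12`. Completing the square
in `r⁻⁶` bounds this below by `-K ^ 2 / (4 P)` near `0`, and by `-K / r ^ 6` away from `0`;
both are dominated by `-C / (1 + r ^ 2) ^ 2`, and `r / (1 + r ^ 2) ^ 2` has the antiderivative
`-1 / (2 (1 + r ^ 2))`. -/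

open Set Filter MeasureTheory

theorem LowerRegular.mono {f g : ℝ → ℝ} (hg : LowerRegular g) (hgf : ∀ r > 0, g r ≤ f r) :
    LowerRegular f :=
  let ⟨ψ, hψ_pos, hψ_anti, hψ_int, hψg⟩ := hg
  ⟨ψ, hψ_pos, hψ_anti, hψ_int, fun r hr => (hψg r hr).trans (hgf r hr)⟩

theorem integrableOn_Ioi_mul_div_one_add_sq_sq :
    IntegrableOn (fun r : ℝ => r / (1 + r ^ 2) ^ 2) (Ioi 0) := by
  refine integrableOn_Ioi_deriv_of_nonneg' (g := fun r => -(2 * (1 + r ^ 2))⁻¹) (l := 0)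
    (fun x _ => ?_) (fun x hx => div_nonneg (le_of_lt hx) (by positivity)) ?_
  · have h : HasDerivAt (fun r : ℝ => 2 * (1 + r ^ 2)) (2 * (2 * x)) x := by
      simpa using ((hasDerivAt_pow 2 x).const_add 1).const_mul 2
    refine (h.inv (by positivity)).neg.congr_deriv ?_
    field_simp
  · have h : Tendsto (fun r : ℝ => 2 * (1 + r ^ 2)) atTop atTop :=
      (tendsto_atTop_add_const_left _ 1 (tendsto_pow_atTop two_ne_zero)).const_mul_atTop two_pos
    simpa using h.inv_tendsto_atTop.neg

theorem lowerRegular_of_neg_div_one_add_sq_sq_le {f : ℝ → ℝ} {C : ℝ} (hC : 0 < C)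
    (hf : ∀ r > 0, -(C / (1 + r ^ 2) ^ 2) ≤ f r) : LowerRegular f := by
  refine ⟨fun r => C / (1 + r ^ 2) ^ 2, fun r _ => by positivity, ?_, ?_, hf⟩
  · intro x hx y _ hxy
    have hx : (0 : ℝ) ≤ x := le_of_lt hx
    dsimp only
    gcongr
  · exact IntegrableOn.congr_fun (integrableOn_Ioi_mul_div_one_add_sq_sq.const_mul C)
      (fun r _ => mul_div_left_comm C r _) measurableSet_Ioi

theorem neg_sq_div_four_mul_le_div_pow_twelve_sub_div_pow_six {P : ℝ} (hP : 0 < P) (K r : ℝ)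
    (hr : r ≠ 0) : -(K ^ 2 / (4 * P)) ≤ P / r ^ 12 - K / r ^ 6 := by
  have h : P / r ^ 12 - K / r ^ 6 + K ^ 2 / (4 * P) = (2 * P / r ^ 6 - K) ^ 2 / (4 * P) := by
    field_simp
    ring
  have : 0 ≤ (2 * P / r ^ 6 - K) ^ 2 / (4 * P) := by positivity
  linarith

theorem div_pow_six_le_four_mul_div_one_add_sq_sq {K r : ℝ} (hK : 0 ≤ K) (hr : 1 ≤ r) :
    K / r ^ 6 ≤ 4 * K / (1 + r ^ 2) ^ 2 := by
  have h : (1 + r ^ 2) ^ 2 ≤ 4 * r ^ 6 := by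
    have h1 : 1 ≤ r ^ 2 := one_le_pow₀ hr
    have h2 : r ^ 4 ≤ r ^ 6 := pow_le_pow_right₀ hr (by norm_num)
    nlinarith
  rw [div_le_div_iff₀ (by positivity) (by positivity)]
  nlinarith [mul_le_mul_of_nonneg_left h hK]

theorem lowerRegular_div_pow_twelve_sub_div_pow_six {P K : ℝ} (hP : 0 < P) (hK : 0 < K) :
    LowerRegular (fun r => P / r ^ 12 - K / r ^ 6) := by
  refine lowerRegular_of_neg_div_one_add_sq_sq_le (C := 4 * (K ^ 2 / (4 * P) + K)) (by positivity)
    fun r hr => ?_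
  rcases le_or_gt r 1 with hr1 | hr1
  · have hbound :
        4 * (K ^ 2 / (4 * P) + K) / 4 ≤ 4 * (K ^ 2 / (4 * P) + K) / (1 + r ^ 2) ^ 2 := by
      have : r ^ 2 ≤ 1 := by nlinarith
      gcongr
      nlinarith
    linarith [neg_sq_div_four_mul_le_div_pow_twelve_sub_div_pow_six hP K r hr.ne']
  · have h1 := div_pow_six_le_four_mul_div_one_add_sq_sq hK.le hr1.le
    have h2 : 4 * K / (1 + r ^ 2) ^ 2 ≤ 4 * (K ^ 2 / (4 * P) + K) / (1 + r ^ 2) ^ 2 := by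
      gcongr
      linarith [show 0 ≤ K ^ 2 / (4 * P) by positivity]
    have h3 : 0 ≤ P / r ^ 12 := by positivity
    linarith

theorem div_pow_twelve_sub_div_pow_six_le_lennardJones {a b ε : ℝ} (ha : 0 ≤ a) (hb : 0 ≤ b)
    (hε : 0 ≤ ε) (r : ℝ) :
    4 * a ^ 12 * (a - 12 * ε) / r ^ 12 - (4 * a * b ^ 6 + 24 * ε * a * b ^ 5) / r ^ 6 ≤
      4 * a * (a ^ 12 / r ^ 12 - b ^ 6 / r ^ 6) -
        4 * ε * a * |12 * a ^ 11 / r ^ 12 - 6 * b ^ 5 / r ^ 6| := by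
  have habs : |12 * a ^ 11 / r ^ 12 - 6 * b ^ 5 / r ^ 6| ≤
      12 * a ^ 11 / r ^ 12 + 6 * b ^ 5 / r ^ 6 :=
    abs_sub_le_iff.mpr ⟨by linarith [show 0 ≤ 6 * b ^ 5 / r ^ 6 by positivity],
      by linarith [show 0 ≤ 12 * a ^ 11 / r ^ 12 by positivity]⟩
  have hexpand : 4 * a ^ 12 * (a - 12 * ε) / r ^ 12 - (4 * a * b ^ 6 + 24 * ε * a * b ^ 5) / r ^ 6
      = 4 * a * (a ^ 12 / r ^ 12 - b ^ 6 / r ^ 6) -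
        4 * ε * a * (12 * a ^ 11 / r ^ 12 + 6 * b ^ 5 / r ^ 6) := by
    ring
  rw [hexpand]
  gcongr

theorem stmt6 (a b ε : ℝ) (ha : 0 < a) (hab : a ≤ b) (hε0 : 0 < ε) (hε : ε < a / 12) :
    LowerRegular (fun r =>
      4 * a * (a ^ 12 / r ^ 12 - b ^ 6 / r ^ 6) -
        4 * ε * a * |12 * a ^ 11 / r ^ 12 - 6 * b ^ 5 / r ^ 6|) := by
  have hb : 0 < b := ha.trans_le hab
  have hP : 0 < 4 * a ^ 12 * (a - 12 * ε) := mul_pos (by positivity) (by linarith)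
  exact (lowerRegular_div_pow_twelve_sub_div_pow_six hP (by positivity)).mono
    fun r _ => div_pow_twelve_sub_div_pow_six_le_lennardJones ha.le hb.le hε0.le r
end

section
/- Let θ₂, θ₃ > 0 and 0 < ε < θ₂θ₃/12. Then the function r ↦ g(r; θ₂, θ₃) − 4ε·|12θ₃¹¹/r¹² − 6θ₃⁵/r⁶| on (0,∞) is lower regular. -/
/-- The Lennard-Jones pair potential with parameters θ₂, θ₃. -/
noncomputable def gLJ (θ₂ θ₃ r : ℝ) : ℝ := 4 * θ₂ * ((θ₃ / r) ^ 12 - (θ₃ / r) ^ 6)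


/-!
Substituting `u = r⁻⁶`, the potential minus the perturbation is bounded below by the quadratic
`c u² - d u` with `c = 4θ₃¹¹(θ₂θ₃ - 12ε) > 0`. Such a quadratic is at least `-d²/(4c)` and at least
`-d u`, so `ψ(r) = min (d²/(4c)) (d/r⁶)` works: it is bounded near `0` and `r ψ(r) = d/r⁵` is
integrable at infinity.
-/

open MeasureTheory Set

lemma neg_min_le_quadratic {c : ℝ} (hc : 0 < c) (d u : ℝ) :
    -min (d ^ 2 / (4 * c)) (d * u) ≤ c * u ^ 2 - d * u := by
  rcases min_cases (d ^ 2 / (4 * c)) (d * u) with ⟨h, _⟩ | ⟨h, _⟩ <;> rw [h]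
  · have : d * u - c * u ^ 2 ≤ d ^ 2 / (4 * c) := by
      rw [le_div_iff₀ (by positivity)]
      nlinarith [sq_nonneg (2 * c * u - d)]
    linarith
  · nlinarith [sq_nonneg u]

lemma integrableOn_Ioi_mul_min_div_pow {n : ℕ} (hn : 2 < n) {M d : ℝ} (hM : 0 ≤ M)
    (hd : 0 ≤ d) : IntegrableOn (fun r => r * min M (d / r ^ n)) (Ioi 0) := by
  have hmeas : AEStronglyMeasurable (fun r : ℝ => r * min M (d / r ^ n)) volume := by
    fun_prop
  rw [← Ioc_union_Ioi_eq_Ioi zero_le_one, integrableOn_union]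
  constructor
  · refine Measure.integrableOn_of_bounded (M := M) (by simp) hmeas ?_
    filter_upwards [ae_restrict_mem measurableSet_Ioc] with r ⟨hr0, hr1⟩
    have : 0 ≤ min M (d / r ^ n) := le_min hM (by positivity)
    rw [Real.norm_eq_abs, abs_of_nonneg (by positivity)]
    exact (mul_le_of_le_one_left this hr1).trans (min_le_left _ _)
  · have hexp : (1 - n : ℝ) < -1 := by
      have : (2 : ℝ) < n := by exact_mod_cast hn
      linarith
    refine ((integrableOn_Ioi_rpow_of_lt hexp one_pos).const_mul d).mono' hmeas.restrict ?_
    filter_upwards [ae_restrict_mem measurableSet_Ioi] with r (hr : 1 < r)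
    have hr0 : 0 < r := one_pos.trans hr
    have : 0 ≤ min M (d / r ^ n) := le_min hM (by positivity)
    rw [Real.norm_eq_abs, abs_of_nonneg (by positivity), Real.rpow_sub hr0, Real.rpow_one,
      Real.rpow_natCast]
    calc r * min M (d / r ^ n) ≤ r * (d / r ^ n) := by gcongr; exact min_le_right _ _
      _ = d * (r / r ^ n) := by ring

lemma LowerRegular.of_quadratic_inv_pow_le {f : ℝ → ℝ} {n : ℕ} (hn : 2 < n) {c d : ℝ}
    (hc : 0 < c) (hd : 0 < d) (hf : ∀ r > 0, c / r ^ (2 * n) - d / r ^ n ≤ f r) :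
    LowerRegular f := by
  have hM : 0 < d ^ 2 / (4 * c) := by positivity
  refine ⟨fun r => min (d ^ 2 / (4 * c)) (d / r ^ n), fun r hr => by positivity, ?_,
    integrableOn_Ioi_mul_min_div_pow hn hM.le hd.le, fun r hr => ?_⟩
  · intro a (ha : 0 < a) b _ hab
    dsimp only
    gcongr
  · calc -min (d ^ 2 / (4 * c)) (d / r ^ n) ≤ c * ((r ^ n)⁻¹) ^ 2 - d * (r ^ n)⁻¹ := by
          simpa only [div_eq_mul_inv] using neg_min_le_quadratic hc d (r ^ n)⁻¹
      _ = c / r ^ (2 * n) - d / r ^ n := by rw [pow_mul', inv_pow]; ring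
      _ ≤ f r := hf r hr

lemma quadratic_inv_pow_six_le_gLJ_sub {θ₂ θ₃ ε : ℝ} (h3 : 0 ≤ θ₃) (hε : 0 ≤ ε) {r : ℝ}
    (hr : 0 < r) :
    4 * θ₃ ^ 11 * (θ₂ * θ₃ - 12 * ε) / r ^ 12 - (4 * θ₂ * θ₃ ^ 6 + 24 * ε * θ₃ ^ 5) / r ^ 6 ≤
      gLJ θ₂ θ₃ r - 4 * ε * |12 * θ₃ ^ 11 / r ^ 12 - 6 * θ₃ ^ 5 / r ^ 6| := by
  have habs : |12 * θ₃ ^ 11 / r ^ 12 - 6 * θ₃ ^ 5 / r ^ 6| ≤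
      12 * θ₃ ^ 11 / r ^ 12 + 6 * θ₃ ^ 5 / r ^ 6 := by
    have : 0 ≤ 12 * θ₃ ^ 11 / r ^ 12 := by positivity
    have : 0 ≤ 6 * θ₃ ^ 5 / r ^ 6 := by positivity
    rw [abs_sub_le_iff]
    constructor <;> linarith
  calc _ = gLJ θ₂ θ₃ r - 4 * ε * (12 * θ₃ ^ 11 / r ^ 12 + 6 * θ₃ ^ 5 / r ^ 6) := by
        rw [gLJ, div_pow, div_pow]; ring
    _ ≤ _ := by gcongr

theorem stmt7 (θ₂ θ₃ ε : ℝ) (h2 : 0 < θ₂) (h3 : 0 < θ₃)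
    (hε0 : 0 < ε) (hε : ε < θ₂ * θ₃ / 12) :
    LowerRegular (fun r =>
      gLJ θ₂ θ₃ r - 4 * ε * |12 * θ₃ ^ 11 / r ^ 12 - 6 * θ₃ ^ 5 / r ^ 6|) := by
  refine LowerRegular.of_quadratic_inv_pow_le (n := 6) (by norm_num) ?_ ?_
    (fun r hr => quadratic_inv_pow_six_le_gLJ_sub h3.le hε0.le hr)
  · have : 0 < θ₂ * θ₃ - 12 * ε := by linarith
    positivity
  · positivity
end
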